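/- arXiv:1911.07517 — 3 statements merged into one kernel-verified Lean document; each statement's English description precedes it below -/
import Mathlib

section
/- For any two d×d density matrices ρ and σ, one has ∑_{a ≠ a'} |ρ_{a a'}| · |σ_{a a'}| ≤ (d−1)/d, where the sum runs over ordered pairs (a,a') with a ≠ a'. -/
open Matrix ComplexOrder BigOperators

/-!
The diagonal `pᵢ = ρᵢᵢ` of a density matrix is a probability vector, and positivity of the
`2 × 2` principal minors gives `|ρᵢⱼ|² ≤ pᵢ pⱼ`. Hence
`∑_{i ≠ j} |ρᵢⱼ|² ≤ ∑_{i ≠ j} pᵢ pⱼ = 1 - ∑ᵢ pᵢ² ≤ 1 - 1/d`, the last step by Cauchy–Schwarz.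
The bound for `∑_{i ≠ j} |ρᵢⱼ| |σᵢⱼ|` then follows from Cauchy–Schwarz over the off-diagonal pairs.
-/

theorem Finset.sum_offDiag_mul {ι R : Type*} [DecidableEq ι] [CommRing R] (s : Finset ι)
    (f : ι → R) :
    ∑ x ∈ s.offDiag, f x.1 * f x.2 = (∑ i ∈ s, f i) ^ 2 - ∑ i ∈ s, f i ^ 2 := by
  rw [eq_sub_iff_add_eq, sq, sum_mul_sum, ← sum_product', ← diag_union_offDiag,
    sum_union (disjoint_diag_offDiag s), sum_diag, add_comm]
  simp only [sq]

namespace Matrix.PosSemidef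

variable {n 𝕜 : Type*} [RCLike 𝕜] {A : Matrix n n 𝕜}

theorem norm_apply_sq_le (hA : A.PosSemidef) (i j : n) :
    ‖A i j‖ ^ 2 ≤ RCLike.re (A i i) * RCLike.re (A j j) := by
  have hdet := (hA.submatrix ![i, j]).det_nonneg
  simp only [det_fin_two, submatrix_apply, cons_val_zero, cons_val_one] at hdet
  rw [← hA.isHermitian.apply i j, RCLike.star_def, RCLike.conj_mul] at hdet
  have hre := (RCLike.nonneg_iff.mp hdet).1
  simp only [map_sub, RCLike.mul_re, (RCLike.nonneg_iff.mp hA.diag_nonneg).2, mul_zero,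
    sub_zero] at hre
  rw [← hA.isHermitian.apply i j, norm_star]
  exact_mod_cast sub_nonneg.mp hre

theorem sum_offDiag_norm_sq_le [Fintype n] [DecidableEq n] (hA : A.PosSemidef)
    (hτ : A.trace = 1) :
    ∑ x ∈ (Finset.univ : Finset n).offDiag, ‖A x.1 x.2‖ ^ 2
      ≤ ((Fintype.card n : ℝ) - 1) / Fintype.card n := by
  set p : n → ℝ := fun i => RCLike.re (A i i)
  have hp : ∑ i, p i = 1 := by
    simpa [trace, map_sum] using congrArg RCLike.re hτ
  have hcard : 1 ≤ (Fintype.card n : ℝ) * ∑ i, p i ^ 2 := by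
    simpa [hp] using sq_sum_le_card_mul_sum_sq (s := Finset.univ) (f := p)
  have hpos : (0 : ℝ) < Fintype.card n :=
    (Nat.cast_nonneg _).lt_of_ne fun h => by norm_num [← h] at hcard
  calc ∑ x ∈ Finset.univ.offDiag, ‖A x.1 x.2‖ ^ 2
      ≤ ∑ x ∈ Finset.univ.offDiag, p x.1 * p x.2 :=
        Finset.sum_le_sum fun x _ => hA.norm_apply_sq_le x.1 x.2
    _ = 1 - ∑ i, p i ^ 2 := by rw [Finset.sum_offDiag_mul, hp, one_pow]
    _ ≤ 1 - (Fintype.card n : ℝ)⁻¹ :=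
        sub_le_sub_left ((inv_le_iff_one_le_mul₀' hpos).mpr hcard) 1
    _ = ((Fintype.card n : ℝ) - 1) / Fintype.card n := by field_simp

end Matrix.PosSemidef

/-- SLHS bound in dimension `d` (Eq. (8)): for two `d × d` density matrices `ρ`, `σ`,
`∑_{a ≠ a'} |ρ_{a a'}| |σ_{a a'}| ≤ (d-1)/d`. -/
theorem slhs_stmt6 {d : ℕ} (ρ σ : Matrix (Fin d) (Fin d) ℂ)
    (hρ : ρ.PosSemidef) (hτρ : ρ.trace = 1)
    (hσ : σ.PosSemidef) (hτσ : σ.trace = 1) :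
    ∑ q ∈ Finset.univ.filter (fun q : Fin d × Fin d => q.1 ≠ q.2), ‖ρ q.1 q.2‖ * ‖σ q.1 q.2‖
      ≤ ((d : ℝ) - 1) / d := by
  have hρb := hρ.sum_offDiag_norm_sq_le hτρ
  have hσb := hσ.sum_offDiag_norm_sq_le hτσ
  rw [Fintype.card_fin] at hρb hσb
  rw [show Finset.univ.filter (fun q : Fin d × Fin d => q.1 ≠ q.2) = Finset.univ.offDiag by
    ext; simp]
  refine (Real.sum_mul_le_sqrt_mul_sqrt _ _ _).trans ?_
  calc √_ * √_ ≤ √(((d : ℝ) - 1) / d) * √(((d : ℝ) - 1) / d) := by gcongr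
    _ = ((d : ℝ) - 1) / d :=
        Real.mul_self_sqrt ((Finset.sum_nonneg fun _ _ => by positivity).trans hρb)
end

section
/- Let ρ be a separable density matrix on ℂ² ⊗ ℂ², i.e. ρ = ∑_λ p(λ) ρ_λ^A ⊗ ρ_λ^B with p a probability distribution and ρ_λ^A, ρ_λ^B qubit density matrices. Then |⟨00| ρ |11⟩| ≤ 1/4, and consequently |⟨00|ρ|11⟩| + |⟨11|ρ|00⟩| ≤ 1/2. -/
/-!
For a qubit density matrix the nonnegative principal 2×2 minor gives `|a₀₁|² ≤ a₀₀ a₁₁`, so by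
AM–GM `|a₀₁| ≤ (a₀₀ + a₁₁)/2 = 1/2`. For a separable state, `⟨00|ρ|11⟩ = ∑ p(λ) (ρ_λ^A)₀₁ (ρ_λ^B)₀₁`
is a convex combination of products of two such entries, hence has modulus at most `1/4`;
the same holds for `⟨11|ρ|00⟩`.
-/

open Matrix ComplexOrder Kronecker BigOperators

namespace Matrix.PosSemidef

open RCLike

variable {n 𝕜 : Type*} [RCLike 𝕜] {A : Matrix n n 𝕜}

theorem norm_apply_sq_le_re_mul_re (hA : A.PosSemidef) (i j : n) :
    ‖A i j‖ ^ 2 ≤ re (A i i) * re (A j j) := by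
  have hdet := (hA.submatrix ![i, j]).det_nonneg
  rw [det_fin_two] at hdet
  simp only [submatrix_apply, Matrix.cons_val_zero, Matrix.cons_val_one] at hdet
  rw [← hA.1.apply j i, ← hA.1.coe_re_apply_self i, ← hA.1.coe_re_apply_self j] at hdet
  simpa [sub_nonneg, RCLike.mul_conj] using (nonneg_iff.mp hdet).1

theorem re_apply_self_nonneg (hA : A.PosSemidef) (i : n) : 0 ≤ re (A i i) :=
  (nonneg_iff.mp hA.diag_nonneg).1

theorem two_mul_norm_apply_le_re_trace [Fintype n] (hA : A.PosSemidef) {i j : n} (hij : i ≠ j) :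
    2 * ‖A i j‖ ≤ re A.trace := by
  classical
  have hii := hA.re_apply_self_nonneg i
  have hjj := hA.re_apply_self_nonneg j
  have amgm : 2 * ‖A i j‖ ≤ re (A i i) + re (A j j) := by
    nlinarith [hA.norm_apply_sq_le_re_mul_re i j, sq_nonneg (re (A i i) - re (A j j)),
      norm_nonneg (A i j)]
  calc 2 * ‖A i j‖ ≤ ∑ k ∈ {i, j}, re (A k k) := by rwa [Finset.sum_pair hij]
    _ ≤ ∑ k, re (A k k) :=
      Finset.sum_le_sum_of_subset_of_nonneg (Finset.subset_univ _)
        fun k _ _ => hA.re_apply_self_nonneg k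
    _ = re A.trace := by simp [Matrix.trace]

theorem norm_apply_le_half_of_trace_eq_one [Fintype n] (hA : A.PosSemidef) (htr : A.trace = 1)
    {i j : n} (hij : i ≠ j) : ‖A i j‖ ≤ 1 / 2 := by
  have := hA.two_mul_norm_apply_le_re_trace hij
  rw [htr, one_re] at this
  linarith

end Matrix.PosSemidef

theorem Matrix.norm_sum_smul_kronecker_apply_le {Λ 𝕜 m n m' n' : Type*} [Fintype Λ] [RCLike 𝕜]
    {p : Λ → ℝ} (hp : ∀ t, 0 ≤ p t) (hp1 : ∑ t, p t = 1)
    {A : Λ → Matrix m n 𝕜} {B : Λ → Matrix m' n' 𝕜} {i : m} {j : n} {k : m'} {l : n'} {a b : ℝ}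
    (hA : ∀ t, ‖A t i j‖ ≤ a) (hB : ∀ t, ‖B t k l‖ ≤ b) :
    ‖(∑ t, (p t : 𝕜) • (A t ⊗ₖ B t)) (i, k) (j, l)‖ ≤ a * b := by
  simp only [Matrix.sum_apply, Matrix.smul_apply, Matrix.kroneckerMap_apply, smul_eq_mul]
  calc ‖∑ t, (p t : 𝕜) * (A t i j * B t k l)‖
      ≤ ∑ t, p t * (‖A t i j‖ * ‖B t k l‖) := by
        refine (norm_sum_le _ _).trans (Finset.sum_le_sum fun t _ => ?_)
        rw [norm_mul, norm_mul, RCLike.norm_ofReal, abs_of_nonneg (hp t)]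
    _ ≤ ∑ t, p t * (a * b) := by
        refine Finset.sum_le_sum fun t _ => mul_le_mul_of_nonneg_left ?_ (hp t)
        exact mul_le_mul (hA t) (hB t) (norm_nonneg _) ((norm_nonneg _).trans (hA t))
    _ = a * b := by rw [← Finset.sum_mul, hp1, one_mul]

/-- No separable two-qubit state violates the SLHS inequality:
`|⟨00|ρ|11⟩| ≤ 1/4` and `|⟨00|ρ|11⟩| + |⟨11|ρ|00⟩| ≤ 1/2`. -/
theorem slhs_stmt8 {Λ : Type*} [Fintype Λ] (p : Λ → ℝ)
    (hp : ∀ lam, 0 ≤ p lam) (hp1 : ∑ lam, p lam = 1)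
    (ρA ρB : Λ → Matrix (Fin 2) (Fin 2) ℂ)
    (hA : ∀ lam, (ρA lam).PosSemidef ∧ (ρA lam).trace = 1)
    (hB : ∀ lam, (ρB lam).PosSemidef ∧ (ρB lam).trace = 1)
    (ρ : Matrix (Fin 2 × Fin 2) (Fin 2 × Fin 2) ℂ)
    (hρ : ρ = ∑ lam, (p lam : ℂ) • (ρA lam ⊗ₖ ρB lam)) :
    ‖ρ (0, 0) (1, 1)‖ ≤ 1 / 4 ∧ ‖ρ (0, 0) (1, 1)‖ + ‖ρ (1, 1) (0, 0)‖ ≤ 1 / 2 := by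
  have offdiag : ∀ {i j : Fin 2}, i ≠ j → ‖ρ (i, i) (j, j)‖ ≤ 1 / 4 := fun hij => by
    have h := Matrix.norm_sum_smul_kronecker_apply_le hp hp1
      (fun t => (hA t).1.norm_apply_le_half_of_trace_eq_one (hA t).2 hij)
      (fun t => (hB t).1.norm_apply_le_half_of_trace_eq_one (hB t).2 hij)
    rw [hρ]
    exact h.trans_eq (by norm_num)
  have h01 := offdiag (i := 0) (j := 1) (by decide)
  have h10 := offdiag (i := 1) (j := 0) (by decide)
  exact ⟨h01, by linarith⟩
end

section
/- Let ρ be a density matrix on ℂ^d ⊗ ℂ^d and let {|φ^a⟩}_{a=0}^{d−1} be an orthonormal basis of ℂ^d. If ⟨φ⁰φ⁰| ρ |φ¹φ¹⟩ = 1/2, then ρ = |ψ⟩⟨ψ| where |ψ⟩ = (|φ⁰φ⁰⟩ + |φ¹φ¹⟩)/√2, i.e. ρ is the Bell state in that basis. -/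
/-!
Conjugating by the unitary whose columns are the product vectors `φ a ⊗ φ b` turns `ρ` into a
density matrix `σ` with `σ₀₀,₁₁ = 1/2` in the standard basis. Positivity of the `2 × 2` minor
gives `σ₀₀,₀₀ σ₁₁,₁₁ ≥ 1/4`, while the trace gives `σ₀₀,₀₀ + σ₁₁,₁₁ ≤ 1`; hence both are `1/2`
and every other diagonal entry vanishes. A vanishing diagonal entry of a positive semidefinite
matrix kills its row and column, so `σ` is the projection onto `(e₀₀ + e₁₁)/√2`.
-/

open Matrix ComplexOrder Kronecker

namespace Matrix

variable {ι : Type*} {M : Matrix ι ι ℂ}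

lemma PosSemidef.normSq_apply_le (hM : M.PosSemidef) (i j : ι) :
    Complex.normSq (M i j) ≤ (M i i).re * (M j j).re := by
  have hdet := (hM.submatrix ![i, j]).det_nonneg
  rw [det_fin_two] at hdet
  simp only [submatrix_apply, cons_val_zero, cons_val_one] at hdet
  rw [← hM.isHermitian.coe_re_apply_self i, ← hM.isHermitian.coe_re_apply_self j,
    ← hM.isHermitian.apply j i, RCLike.star_def, Complex.mul_conj, sub_nonneg] at hdet
  simpa using (Complex.le_def.mp hdet).1

variable [Fintype ι] [DecidableEq ι]

lemma PosSemidef.apply_eq_zero_of_diag_eq_zero (hM : M.PosSemidef) {i : ι} (hi : M i i = 0)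
    (k : ι) : M i k = 0 ∧ M k i = 0 := by
  have hcol := (hM.dotProduct_mulVec_zero_iff (Pi.single i 1)).1 (by
    simpa [mulVec_single_one, single_one_dotProduct] using hi)
  have hki : M k i = 0 := by simpa [mulVec_single_one] using congr_fun hcol k
  refine ⟨?_, hki⟩
  rw [← hM.isHermitian.apply i k, hki, star_zero]

lemma PosSemidef.diag_eq_of_trace_eq_one_of_apply_eq_half (hM : M.PosSemidef)
    (htr : M.trace = 1) {a b : ι} (hab : a ≠ b) (hMab : M a b = 1 / 2) :
    M a a = 1 / 2 ∧ M b b = 1 / 2 ∧ ∀ i, i ≠ a → i ≠ b → M i i = 0 := by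
  set p : ι → ℝ := fun i => (M i i).re
  have hdiag (i : ι) : M i i = p i := (hM.isHermitian.coe_re_apply_self i).symm
  have hp (i : ι) : 0 ≤ p i := (Complex.nonneg_iff.mp hM.diag_nonneg).1
  have hsum (s : Finset ι) : ∑ i ∈ s, p i ≤ 1 := by
    have htr' : ∑ i, p i = 1 := by simpa [trace, p, Complex.re_sum] using congrArg Complex.re htr
    exact htr' ▸ Finset.sum_le_univ_sum_of_nonneg hp
  have hprod : 1 / 4 ≤ p a * p b := by
    have := hM.normSq_apply_le a b
    rw [hMab] at this
    norm_num [Complex.normSq_apply] at this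
    linarith
  have hpair : p a + p b ≤ 1 := by simpa [Finset.sum_pair hab] using hsum {a, b}
  have hpa : p a = 1 / 2 := by nlinarith [hp a, hp b, sq_nonneg (p a - p b)]
  have hpb : p b = 1 / 2 := by nlinarith [hp a, hp b, sq_nonneg (p a - p b)]
  refine ⟨by simp [hdiag, hpa], by simp [hdiag, hpb], fun i hia hib => ?_⟩
  have htriple : p a + p b + p i ≤ 1 := by
    simpa [Finset.sum_insert, hab, hia.symm, hib.symm, add_assoc] using hsum {a, b, i}
  have hpi : p i = 0 := by linarith [hp i]
  simp [hdiag, hpi]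

lemma PosSemidef.eq_vecMulVec_of_trace_eq_one_of_apply_eq_half (hM : M.PosSemidef)
    (htr : M.trace = 1) {a b : ι} (hab : a ≠ b) (hMab : M a b = 1 / 2) :
    M = vecMulVec (((√2 : ℝ) : ℂ)⁻¹ • (Pi.single a 1 + Pi.single b 1))
      (star (((√2 : ℝ) : ℂ)⁻¹ • (Pi.single a 1 + Pi.single b 1))) := by
  obtain ⟨haa, hbb, hout⟩ := hM.diag_eq_of_trace_eq_one_of_apply_eq_half htr hab hMab
  have hba : M b a = 1 / 2 := by rw [← hM.isHermitian.apply b a, hMab]; simp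
  have hsqrt : ((√2 : ℝ) : ℂ)⁻¹ * ((√2 : ℝ) : ℂ)⁻¹ = 1 / 2 := by
    rw [← mul_inv, ← Complex.ofReal_mul, Real.mul_self_sqrt zero_le_two]; norm_num
  ext i j
  by_cases hi : i = a ∨ i = b
  · by_cases hj : j = a ∨ j = b
    · rcases hi with rfl | rfl <;> rcases hj with rfl | rfl <;>
        simp [vecMulVec_apply, hab, hab.symm, haa, hbb, hMab, hba, hsqrt]
    · obtain ⟨hja, hjb⟩ := not_or.mp hj
      simp [(hM.apply_eq_zero_of_diag_eq_zero (hout j hja hjb) i).2, vecMulVec_apply,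
        Pi.single_apply, hja, hjb]
  · obtain ⟨hia, hib⟩ := not_or.mp hi
    simp [(hM.apply_eq_zero_of_diag_eq_zero (hout i hia hib) j).1, vecMulVec_apply,
      Pi.single_apply, hia, hib]

lemma PosSemidef.eq_vecMulVec_of_dotProduct_col_eq_half {ρ U : Matrix ι ι ℂ}
    (hU : U ∈ unitary (Matrix ι ι ℂ)) (hρ : ρ.PosSemidef) (htr : ρ.trace = 1) {a b : ι}
    (hab : a ≠ b) (h : star (U.col a) ⬝ᵥ ρ *ᵥ U.col b = 1 / 2) :
    ρ = vecMulVec (((√2 : ℝ) : ℂ)⁻¹ • (U.col a + U.col b))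
      (star (((√2 : ℝ) : ℂ)⁻¹ • (U.col a + U.col b))) := by
  set σ := Uᴴ * ρ * U with hσ
  have hσtr : σ.trace = 1 := by
    rw [hσ, trace_mul_cycle, ← star_eq_conjTranspose, Unitary.mul_star_self_of_mem hU, one_mul, htr]
  have hσab : σ a b = 1 / 2 := by
    rw [← h, hσ, Matrix.mul_assoc, mul_apply]
    rfl
  have hρ_eq : ρ = U * σ * Uᴴ := by
    rw [hσ, ← star_eq_conjTranspose]
    simp only [← Matrix.mul_assoc, Unitary.mul_star_self_of_mem hU, one_mul]
    rw [Matrix.mul_assoc, Unitary.mul_star_self_of_mem hU, mul_one]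
  have hσpsd : σ.PosSemidef := hρ.conjTranspose_mul_mul_same U
  rw [hρ_eq, hσpsd.eq_vecMulVec_of_trace_eq_one_of_apply_eq_half hσtr hab hσab, mul_vecMulVec,
    vecMulVec_mul, ← star_mulVec]
  simp [mulVec_smul, mulVec_add]

lemma mem_unitary_of_orthonormal_col {R : Type*} [CommRing R] [StarRing R] {A : Matrix ι ι R}
    (hA : ∀ a b, star (A.col a) ⬝ᵥ A.col b = if a = b then 1 else 0) :
    A ∈ unitary (Matrix ι ι R) := by
  refine mem_unitaryGroup_iff'.mpr ?_
  ext a b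
  rw [one_apply, ← hA a b, star_eq_conjTranspose, mul_apply]
  rfl

end Matrix

/-- Self-testing of the Bell state: if a density matrix on `ℂ^d ⊗ ℂ^d` (here `d = n + 2 ≥ 2`)
has `⟨φ⁰φ⁰|ρ|φ¹φ¹⟩ = 1/2` in some orthonormal basis `{φ^a}`, then
`ρ = |ψ⟩⟨ψ|` with `|ψ⟩ = (|φ⁰φ⁰⟩ + |φ¹φ¹⟩)/√2`. -/
theorem slhs_stmt11 {n : ℕ}
    (φ : Fin (n + 2) → (Fin (n + 2) → ℂ))
    (hortho : ∀ a b, star (φ a) ⬝ᵥ φ b = if a = b then (1 : ℂ) else 0)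
    (ρ : Matrix (Fin (n + 2) × Fin (n + 2)) (Fin (n + 2) × Fin (n + 2)) ℂ)
    (hρ : ρ.PosSemidef) (hτ : ρ.trace = 1)
    (h : star (fun x : Fin (n + 2) × Fin (n + 2) => φ 0 x.1 * φ 0 x.2) ⬝ᵥ
        ρ *ᵥ (fun x : Fin (n + 2) × Fin (n + 2) => φ 1 x.1 * φ 1 x.2) = 1 / 2) :
    ρ = Matrix.vecMulVec
      (fun x : Fin (n + 2) × Fin (n + 2) =>
        (φ 0 x.1 * φ 0 x.2 + φ 1 x.1 * φ 1 x.2) / Real.sqrt 2)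
      (star fun x : Fin (n + 2) × Fin (n + 2) =>
        (φ 0 x.1 * φ 0 x.2 + φ 1 x.1 * φ 1 x.2) / Real.sqrt 2) := by
  set U := (of φ)ᵀ ⊗ₖ (of φ)ᵀ
  have hΦ : (of φ)ᵀ ∈ unitary _ := mem_unitary_of_orthonormal_col hortho
  have hU : U ∈ unitary _ := kronecker_mem_unitary hΦ hΦ
  have hab : ((0, 0) : Fin (n + 2) × Fin (n + 2)) ≠ (1, 1) := by simp
  have hψ : (fun x : Fin (n + 2) × Fin (n + 2) =>
      (φ 0 x.1 * φ 0 x.2 + φ 1 x.1 * φ 1 x.2) / Real.sqrt 2) =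
      ((√2 : ℝ) : ℂ)⁻¹ • (U.col (0, 0) + U.col (1, 1)) := by
    ext x; simp [U, div_eq_inv_mul]
  rw [hψ]
  exact hρ.eq_vecMulVec_of_dotProduct_col_eq_half hU hτ hab h
end
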